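/- Let f : U → ℝᵐ be a smooth immersion of a connected open set U ⊆ ℝⁿ. Fix u ∈ U and let X₀ ∈ ℝⁿ be the unique vector with fderiv ℝ f u X₀ = x^T(u). Then for every X ∈ ℝⁿ the normal component of the ambient directional derivative of the normal position field satisfies ( fderiv ℝ (fun v => x^N(v)) u X ) − P_u( fderiv ℝ (fun v => x^N(v)) u X ) = − h_u(X, X₀). (Equation (4.8): D_Z x^N = −h(Z, x^T) for the normal connection D.) -/

import Mathlib

open scoped RealInnerProductSpace

section AuxLemmas
variable {n m : ℕ}
local notation "E" => EuclideanSpace ℝ (Fin n)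
local notation "F" => EuclideanSpace ℝ (Fin m)

lemma gram_isUnit {A : E →L[ℝ] F} (hA : Function.Injective A) :
    IsUnit ((ContinuousLinearMap.adjoint A).comp A) := by
  set G := (ContinuousLinearMap.adjoint A).comp A with hG
  have hGinj : Function.Injective G := by
    intro x y hxy
    have h1 : ∀ z, G z = 0 → z = 0 := by
      intro z hz
      have h2 : ⟪A z, A z⟫ = 0 := by
        have h3 := ContinuousLinearMap.adjoint_inner_left A z (A z)
        rw [show (ContinuousLinearMap.adjoint A) (A z) = G z from rfl, hz] at h3
        simpa using h3.symm
      have : A z = 0 := inner_self_eq_zero.mp h2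
      exact hA (by simpa using this)
    exact sub_eq_zero.mp (h1 (x - y) (by simp [map_sub, sub_eq_zero.mpr hxy]))
  have hGsurj : Function.Surjective G :=
    LinearMap.injective_iff_surjective.mp hGinj
  let e : E ≃ₗ[ℝ] E := LinearEquiv.ofBijective (G : E →ₗ[ℝ] E) ⟨hGinj, hGsurj⟩
  exact ⟨(e.toContinuousLinearEquiv).toUnit, by ext x; rfl⟩

lemma proj_formula {A : E →L[ℝ] F} (hA : Function.Injective A) (w : F) :
    ((Submodule.orthogonalProjectionOnto (LinearMap.range (A : E →ₗ[ℝ] F)) w : F)) =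
      A (Ring.inverse ((ContinuousLinearMap.adjoint A).comp A)
        ((ContinuousLinearMap.adjoint A) w)) := by
  set G := (ContinuousLinearMap.adjoint A).comp A with hG
  set z := Ring.inverse G ((ContinuousLinearMap.adjoint A) w) with hz
  have hGz : G z = (ContinuousLinearMap.adjoint A) w := by
    have h1 : G * Ring.inverse G = 1 := Ring.mul_inverse_cancel G (gram_isUnit hA)
    calc G z = (G * Ring.inverse G) ((ContinuousLinearMap.adjoint A) w) := rfl
    _ = _ := by rw [h1]; rfl
  rw [Submodule.coe_orthogonalProjectionOnto_apply]
  apply Submodule.eq_starProjection_of_mem_of_inner_eq_zero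
  · exact ⟨z, rfl⟩
  · rintro t ⟨y, rfl⟩
    have h4 : ⟪w - A z, A y⟫ = ⟪(ContinuousLinearMap.adjoint A) (w - A z), y⟫ :=
      (ContinuousLinearMap.adjoint_inner_left A y (w - A z)).symm
    rw [ContinuousLinearMap.coe_coe, h4, map_sub]
    rw [show (ContinuousLinearMap.adjoint A) (A z) = G z from rfl, hGz]
    simp

end AuxLemmas

/-- Orthogonal projection of `v` onto the tangent space `T_u = range (fderiv ℝ f u)`. -/
noncomputable def tangentProj {n m : ℕ}
    (f : EuclideanSpace ℝ (Fin n) → EuclideanSpace ℝ (Fin m))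
    (u : EuclideanSpace ℝ (Fin n)) (v : EuclideanSpace ℝ (Fin m)) :
    EuclideanSpace ℝ (Fin m) :=
  (Submodule.orthogonalProjectionOnto (LinearMap.range
    (fderiv ℝ f u : EuclideanSpace ℝ (Fin n) →ₗ[ℝ] EuclideanSpace ℝ (Fin m))) v : EuclideanSpace ℝ (Fin m))

/-- Tangential component `x^T(u)` of the position vector. -/
noncomputable def posT {n m : ℕ}
    (f : EuclideanSpace ℝ (Fin n) → EuclideanSpace ℝ (Fin m))
    (u : EuclideanSpace ℝ (Fin n)) : EuclideanSpace ℝ (Fin m) :=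
  tangentProj f u (f u)

/-- Normal component `x^N(u)` of the position vector. -/
noncomputable def posN {n m : ℕ}
    (f : EuclideanSpace ℝ (Fin n) → EuclideanSpace ℝ (Fin m))
    (u : EuclideanSpace ℝ (Fin n)) : EuclideanSpace ℝ (Fin m) :=
  f u - tangentProj f u (f u)

/-- Second fundamental form `h_u(X,Y)`: the normal component of the second derivative. -/
noncomputable def sff {n m : ℕ}
    (f : EuclideanSpace ℝ (Fin n) → EuclideanSpace ℝ (Fin m))
    (u X Y : EuclideanSpace ℝ (Fin n)) : EuclideanSpace ℝ (Fin m) :=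
  fderiv ℝ (fderiv ℝ f) u X Y - tangentProj f u (fderiv ℝ (fderiv ℝ f) u X Y)

/-- **Equation (4.8).** For a smooth immersion `f : U → ℝᵐ`, if `X₀` is the tangent vector
at `u` with `fderiv ℝ f u X₀ = x^T(u)`, then the normal component of the ambient derivative
of the normal position field `x^N` in any direction `X` equals `−h_u(X, X₀)`
(`D_Z x^N = −h(Z, x^T)`). -/
theorem stmt_6 {n m : ℕ} (hn : 0 < n) (hnm : n < m)
    (U : Set (EuclideanSpace ℝ (Fin n))) (hU : IsOpen U) (hUconn : IsConnected U)
    (f : EuclideanSpace ℝ (Fin n) → EuclideanSpace ℝ (Fin m))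
    (hf : ContDiffOn ℝ (⊤ : ℕ∞) f U)
    (himm : ∀ u ∈ U, Function.Injective (fderiv ℝ f u))
    (u : EuclideanSpace ℝ (Fin n)) (hu : u ∈ U)
    (X₀ : EuclideanSpace ℝ (Fin n)) (hX₀ : fderiv ℝ f u X₀ = posT f u) :
    ∀ X : EuclideanSpace ℝ (Fin n),
      fderiv ℝ (fun v => posN f v) u X
        - tangentProj f u (fderiv ℝ (fun v => posN f v) u X) = - sff f u X X₀ := by
  intro X
  have hmemU : U ∈ nhds u := hU.mem_nhds hu
  have hfd : DifferentiableAt ℝ f u :=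
    (hf.contDiffAt hmemU).differentiableAt (by simp)
  have hAcd : ContDiffOn ℝ (⊤ : ℕ∞) (fderiv ℝ f) U := hf.fderiv_of_isOpen hU (by simp)
  have hAd : DifferentiableAt ℝ (fderiv ℝ f) u :=
    ((hAcd.contDiffAt hmemU).differentiableAt (by simp))
  have hBd : DifferentiableAt ℝ
      (fun v => ContinuousLinearMap.adjoint (fderiv ℝ f v)) u := by
    have heq := ((ContinuousLinearMap.adjoint :
      (EuclideanSpace ℝ (Fin n) →L[ℝ] EuclideanSpace ℝ (Fin m)) ≃ₗᵢ[ℝ]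
      _).toContinuousLinearEquiv).differentiableAt (x := fderiv ℝ f u)
    exact heq.comp u hAd
  have hGd : DifferentiableAt ℝ
      (fun v => (ContinuousLinearMap.adjoint (fderiv ℝ f v)).comp (fderiv ℝ f v)) u :=
    hBd.clm_comp hAd
  have hGu : IsUnit ((ContinuousLinearMap.adjoint (fderiv ℝ f u)).comp (fderiv ℝ f u)) :=
    gram_isUnit (himm u hu)
  set Y : EuclideanSpace ℝ (Fin n) → EuclideanSpace ℝ (Fin n) := fun v =>
    Ring.inverse ((ContinuousLinearMap.adjoint (fderiv ℝ f v)).comp (fderiv ℝ f v))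
      ((ContinuousLinearMap.adjoint (fderiv ℝ f v)) (f v)) with hYdef
  have hYd : DifferentiableAt ℝ Y u :=
    (hGd.inverse hGu).clm_apply (hBd.clm_apply hfd)
  have hEq : (fun v => posN f v) =ᶠ[nhds u]
      (fun v => f v - fderiv ℝ f v (Y v)) := by
    filter_upwards [hmemU] with v hv
    simp only [posN, tangentProj, hYdef]
    rw [proj_formula (himm v hv)]
  have hφd : DifferentiableAt ℝ (fun v => fderiv ℝ f v (Y v)) u := hAd.clm_apply hYd
  have hYu : Y u = X₀ := by
    apply himm u hu
    rw [hX₀, posT, tangentProj, proj_formula (himm u hu)]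
  have hfder : fderiv ℝ (fun v => posN f v) u X
      = fderiv ℝ f u X - (fderiv ℝ f u (fderiv ℝ Y u X)
        + fderiv ℝ (fderiv ℝ f) u X X₀) := by
    rw [hEq.fderiv_eq, fderiv_fun_sub hfd hφd, fderiv_clm_apply hAd hYd, hYu]
    simp
  set w := fderiv ℝ (fderiv ℝ f) u X X₀ with hw
  set t := fderiv ℝ f u X - fderiv ℝ f u (fderiv ℝ Y u X) with ht
  have hD : fderiv ℝ (fun v => posN f v) u X = t - w := by
    rw [hfder, ht]; abel
  have htt : tangentProj f u t = t := by
    rw [tangentProj, Submodule.coe_orthogonalProjectionOnto_apply, Submodule.starProjection_eq_self_iff.2]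
    exact ⟨X - fderiv ℝ Y u X, by simp [ht, map_sub]⟩
  have hsub : tangentProj f u (t - w) = t - tangentProj f u w := by
    have : tangentProj f u (t - w) = tangentProj f u t - tangentProj f u w := by
      simp [tangentProj, map_sub]
    rw [this, htt]
  rw [hD, hsub, sff, ← hw]
  abel
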